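/- arXiv:1210.7627 — 2 statements merged into one kernel-verified Lean document; each statement's English description precedes it below -/
import Mathlib

section
/- Let G be a simple graph on a vertex type V, let n ≥ 3 be a natural number, and let α_0, α_1, …, α_n be a walk in G such that d(α_0, α_{n−1}) = n − 1 and d(α_{n−2}, α_n) = 2. Let X be a metric space and let π : V → Set X be a coarse projection away from the two-element set {α_{n−2}, α_{n−1}}, and assume diam(π(α_0) ∪ π(α_n)) > 2·n. Then every walk from α_0 to α_n whose length equals d(α_0, α_n) contains α_{n−2} or α_{n−1} among its vertices. -/
/-- A set-valued map `π : V → Set X` is a *coarse projection away from `W`* if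
`π v` is nonempty and bounded for every vertex `v ∉ W`, and
`diam (π u ∪ π v) ≤ 2` for every pair of adjacent vertices `u, v ∉ W`. -/
def CoarseProjection {V X : Type*} [MetricSpace X] (G : SimpleGraph V)
    (π : V → Set X) (W : Set V) : Prop :=
  (∀ v ∉ W, (π v).Nonempty ∧ Bornology.IsBounded (π v)) ∧
  (∀ u v, G.Adj u v → u ∉ W → v ∉ W → Metric.diam (π u ∪ π v) ≤ 2)

private lemma chain_diam {X : Type*} [MetricSpace X] {A B C : Set X}
    (hB : B.Nonempty) (hAB : Bornology.IsBounded (A ∪ B))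
    (hBC : Bornology.IsBounded (B ∪ C)) :
    Metric.diam (A ∪ C) ≤ Metric.diam (A ∪ B) + Metric.diam (B ∪ C) := by
  obtain ⟨b, hb⟩ := hB
  apply Metric.diam_le_of_forall_dist_le
    (add_nonneg Metric.diam_nonneg Metric.diam_nonneg)
  intro x hx y hy
  have hxb : ∀ z ∈ A, dist z b ≤ Metric.diam (A ∪ B) := fun z hz =>
    Metric.dist_le_diam_of_mem hAB (Set.mem_union_left _ hz) (Set.mem_union_right _ hb)
  have hcb : ∀ z ∈ C, dist z b ≤ Metric.diam (B ∪ C) := fun z hz =>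
    Metric.dist_le_diam_of_mem hBC (Set.mem_union_right _ hz) (Set.mem_union_left _ hb)
  have hnA : (0:ℝ) ≤ Metric.diam (A ∪ B) := Metric.diam_nonneg
  have hnC : (0:ℝ) ≤ Metric.diam (B ∪ C) := Metric.diam_nonneg
  rcases hx with hx | hx <;> rcases hy with hy | hy
  · have : dist x y ≤ Metric.diam (A ∪ B) :=
      Metric.dist_le_diam_of_mem hAB (Set.mem_union_left _ hx) (Set.mem_union_left _ hy)
    linarith
  · have h1 := hxb x hx
    have h2 := hcb y hy
    have := dist_triangle x b y
    rw [dist_comm b y] at this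
    linarith
  · have h1 := hcb x hx
    have h2 := hxb y hy
    have := dist_triangle x b y
    rw [dist_comm b y] at this
    linarith
  · have : dist x y ≤ Metric.diam (B ∪ C) :=
      Metric.dist_le_diam_of_mem hBC (Set.mem_union_right _ hx) (Set.mem_union_right _ hy)
    linarith

private lemma walk_diam {V X : Type*} [MetricSpace X] {G : SimpleGraph V}
    {π : V → Set X} {W : Set V} (hπ : CoarseProjection G π W) :
    ∀ {a b : V} (p : G.Walk a b), 0 < p.length → (∀ v ∈ p.support, v ∉ W) →
      Metric.diam (π a ∪ π b) ≤ 2 * p.length := by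
  intro a b p
  induction p with
  | nil => intro h; simp at h
  | @cons a c b hadj q ih =>
    intro _ hsupp
    have ha : a ∉ W := hsupp a (by simp)
    have hc : c ∉ W := hsupp c (by simp [SimpleGraph.Walk.support_cons])
    have hb : b ∉ W := hsupp b (SimpleGraph.Walk.end_mem_support _)
    rcases Nat.eq_zero_or_pos q.length with h0 | hpos
    · have : c = b := q.eq_of_length_eq_zero h0
      subst this
      have := hπ.2 a c hadj ha hc
      simp only [SimpleGraph.Walk.length_cons, h0]
      push_cast
      linarith
    · have ihq : Metric.diam (π c ∪ π b) ≤ 2 * q.length :=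
        ih hpos (fun v hv => hsupp v (by simp [SimpleGraph.Walk.support_cons, hv]))
      have hstep : Metric.diam (π a ∪ π c) ≤ 2 := hπ.2 a c hadj ha hc
      have hchain : Metric.diam (π a ∪ π b) ≤
          Metric.diam (π a ∪ π c) + Metric.diam (π c ∪ π b) := by
        refine chain_diam (hπ.1 c hc).1 ?_ ?_
        · exact ((hπ.1 a ha).2).union ((hπ.1 c hc).2)
        · exact ((hπ.1 c hc).2).union ((hπ.1 b hb).2)
      simp only [SimpleGraph.Walk.length_cons]
      push_cast
      linarith

/-- Claim in Proposition 4.2 (abstract): every geodesic walk from `α_0` to `α_n`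
contains `α_{n-2}` or `α_{n-1}` among its vertices. -/
theorem stmt_7 {V X : Type*} [MetricSpace X] (G : SimpleGraph V)
    (n : ℕ) (hn : 3 ≤ n) (α : ℕ → V)
    (hwalk : ∀ i < n, G.Adj (α i) (α (i + 1)))
    (hd1 : G.dist (α 0) (α (n - 1)) = n - 1)
    (hd2 : G.dist (α (n - 2)) (α n) = 2)
    (π : V → Set X)
    (hπ : CoarseProjection G π ({α (n - 2), α (n - 1)} : Set V))
    (hbig : 2 * (n : ℝ) < Metric.diam (π (α 0) ∪ π (α n))) :
    ∀ p : G.Walk (α 0) (α n), p.length = G.dist (α 0) (α n) →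
      α (n - 2) ∈ p.support ∨ α (n - 1) ∈ p.support := by
  intro p hp
  by_contra hcon
  push_neg at hcon
  obtain ⟨h2, h1⟩ := hcon
  -- there is a walk from α 0 to α n of length n
  have hex : ∀ m, m ≤ n → ∃ q : G.Walk (α 0) (α m), q.length = m := by
    intro m
    induction m with
    | zero => exact fun _ => ⟨SimpleGraph.Walk.nil, rfl⟩
    | succ k ihk =>
      intro hk
      obtain ⟨q, hq⟩ := ihk (Nat.le_of_succ_le hk)
      exact ⟨q.concat (hwalk k (Nat.lt_of_succ_le hk)), by simp [hq]⟩
  obtain ⟨q, hq⟩ := hex n le_rfl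
  have hdist_le : G.dist (α 0) (α n) ≤ n := by
    have := G.dist_le q
    omega
  -- the walk is not trivial
  have hadj_last : G.Adj (α (n - 1)) (α n) := by
    have := hwalk (n - 1) (by omega)
    rwa [Nat.sub_add_cancel (by omega)] at this
  have hlen_pos : 0 < p.length := by
    rcases Nat.eq_zero_or_pos p.length with h0 | h; swap
    · exact h
    have heq : α 0 = α n := p.eq_of_length_eq_zero h0
    have : G.dist (α (n - 1)) (α n) = 1 := SimpleGraph.dist_eq_one_iff_adj.mpr hadj_last
    rw [← heq, G.dist_comm] at this
    omega
  -- the walk avoids W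
  have hsupp : ∀ v ∈ p.support, v ∉ ({α (n - 2), α (n - 1)} : Set V) := by
    intro v hv hvW
    rcases hvW with h | h
    · exact h2 (h ▸ hv)
    · exact h1 (h ▸ hv)
  have hd := walk_diam hπ p hlen_pos hsupp
  have : (p.length : ℝ) ≤ n := by exact_mod_cast hp ▸ hdist_le
  linarith
end

section
/- Let G be a simple graph on a vertex type V, let n ≥ 4 be an even natural number, and let α_0, α_1, …, α_n be a walk in G. Assume d(α_0, α_2) = 2 and d(α_k, α_{k+2}) = 2 for every even k with 2 ≤ k ≤ n − 2. Assume moreover that for every even k with 2 ≤ k ≤ n − 2 there are a metric space X_k and a map π_k : V → Set(X_k) which is a coarse projection away from the single vertex α_k and which satisfies diam(π_k(α_{k−2}) ∪ π_k(α_{k+2})) ≥ 4·n. Then d(α_0, α_k) = k for every even k with 2 ≤ k ≤ n; in particular d(α_0, α_n) = n. -/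
open Metric Bornology in
private lemma diam_union_triangle' {X : Type*} [MetricSpace X] {A B C : Set X}
    (hB : B.Nonempty) (hAB : IsBounded (A ∪ B)) (hBC : IsBounded (B ∪ C)) :
    diam (A ∪ C) ≤ diam (A ∪ B) + diam (B ∪ C) := by
  obtain ⟨b, hb⟩ := hB
  apply Metric.diam_le_of_forall_dist_le (by positivity)
  rintro x (hx | hx) y (hy | hy)
  · exact le_trans (dist_le_diam_of_mem hAB (Or.inl hx) (Or.inl hy))
      (le_add_of_nonneg_right diam_nonneg)
  · calc dist x y ≤ dist x b + dist b y := dist_triangle _ _ _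
      _ ≤ _ := add_le_add (dist_le_diam_of_mem hAB (Or.inl hx) (Or.inr hb))
          (dist_le_diam_of_mem hBC (Or.inl hb) (Or.inr hy))
  · calc dist x y ≤ dist x b + dist b y := dist_triangle _ _ _
      _ ≤ diam (B ∪ C) + diam (A ∪ B) :=
          add_le_add (dist_le_diam_of_mem hBC (Or.inr hx) (Or.inl hb))
            (dist_le_diam_of_mem hAB (Or.inr hb) (Or.inl hy))
      _ = _ := add_comm _ _
  · exact le_trans (dist_le_diam_of_mem hBC (Or.inr hx) (Or.inr hy))
      (le_add_of_nonneg_left diam_nonneg)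

open Metric Bornology in
private lemma walk_proj_bound {V X : Type*} [MetricSpace X] {G : SimpleGraph V}
    {π : V → Set X} {W : Set V} (hπ : CoarseProjection G π W) :
    ∀ {a b : V} (p : G.Walk a b), (∀ v ∈ p.support, v ∉ W) → 1 ≤ p.length →
      diam (π a ∪ π b) ≤ 2 * (p.length : ℝ) := by
  intro a b p
  induction p with
  | nil => intro _ h; simp at h
  | @cons a c b h q ih =>
    intro hsup _
    have ha : a ∉ W := hsup a (by simp)
    have hc : c ∉ W := hsup c (by simp [SimpleGraph.Walk.start_mem_support])
    have hq : ∀ v ∈ q.support, v ∉ W := fun v hv => hsup v (by simp [hv])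
    cases q with
    | nil =>
      simpa using hπ.2 a c h ha hc
    | @cons c d b h' q' =>
      have hb : b ∉ W :=
        hq b (SimpleGraph.Walk.end_mem_support _)
      have h1 : diam (π a ∪ π b) ≤ diam (π a ∪ π c) + diam (π c ∪ π b) := by
        refine diam_union_triangle' (hπ.1 c hc).1 ?_ ?_
        · exact ((hπ.1 a ha).2).union (hπ.1 c hc).2
        · exact ((hπ.1 c hc).2).union (hπ.1 b hb).2
      have h2 : diam (π a ∪ π c) ≤ 2 := hπ.2 a c h ha hc
      have h3 : diam (π c ∪ π b) ≤ 2 * (((SimpleGraph.Walk.cons h' q').length : ℕ) : ℝ) :=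
        ih hq (by simp)
      have hlen : ((SimpleGraph.Walk.cons h (SimpleGraph.Walk.cons h' q')).length : ℝ)
          = ((SimpleGraph.Walk.cons h' q').length : ℝ) + 1 := by
        push_cast [SimpleGraph.Walk.length_cons]; ring
      rw [hlen]
      linarith

/-- Assertion 4.3 (abstract): the inductively constructed even-length walk is a
geodesic: `d(α_0, α_k) = k` for every even `k` with `2 ≤ k ≤ n`. -/
theorem stmt_9 {V : Type*} (G : SimpleGraph V)
    (n : ℕ) (hn : 4 ≤ n) (hne : Even n) (α : ℕ → V)
    (hwalk : ∀ i < n, G.Adj (α i) (α (i + 1)))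
    (hd0 : G.dist (α 0) (α 2) = 2)
    (hd : ∀ k, Even k → 2 ≤ k → k ≤ n - 2 → G.dist (α k) (α (k + 2)) = 2)
    (hproj : ∀ k, Even k → 2 ≤ k → k ≤ n - 2 →
      ∃ (X : Type) (inst : MetricSpace X) (π : V → Set X),
        @CoarseProjection V X inst G π {α k} ∧
        4 * (n : ℝ) ≤
          @Metric.diam X inst.toPseudoMetricSpace (π (α (k - 2)) ∪ π (α (k + 2)))) :
    ∀ k, Even k → 2 ≤ k → k ≤ n → G.dist (α 0) (α k) = k := by
  classical
  have hreach : ∀ j, j ≤ n → G.Reachable (α 0) (α j) := by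
    intro j
    induction j with
    | zero => intro _; exact SimpleGraph.Reachable.refl _
    | succ m ih =>
      intro hj
      exact (ih (by omega)).trans (hwalk m (by omega)).reachable
  have key : ∀ k, Even k → k ≤ n → G.dist (α 0) (α k) = k := by
    intro k
    induction k using Nat.strong_induction_on with
    | _ k ih =>
      intro hke hkn
      rcases Nat.lt_or_ge k 4 with h4 | h4
      · interval_cases k
        · simp
        · exact absurd hke (by decide)
        · exact hd0
        · exact absurd hke (by decide)
      · obtain ⟨m, rfl⟩ : ∃ m, k = m + 2 := ⟨k - 2, by omega⟩
        have hme : Even m := by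
          rcases hke with ⟨t, ht⟩; exact ⟨t - 1, by omega⟩
        have hm2 : 2 ≤ m := by omega
        have hmn : m ≤ n - 2 := by omega
        -- distances already known
        have hdm : G.dist (α 0) (α m) = m := ih m (by omega) hme (by omega)
        have hdm2 : G.dist (α 0) (α (m - 2)) = m - 2 := by
          rcases eq_or_lt_of_le hm2 with h | h
          · have : m - 2 = 0 := by omega
            rw [this]; simp
          · exact ih (m - 2) (by omega) (by rcases hme with ⟨t, ht⟩; exact ⟨t - 1, by omega⟩)
              (by omega)
        have hαm2 : G.dist (α (m - 2)) (α m) = 2 := by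
          rcases eq_or_lt_of_le hm2 with h | h
          · have h0 : m - 2 = 0 := by omega
            rw [h0, show m = 0 + 2 by omega]; exact hd0
          · have hm4 : 4 ≤ m := by rcases hme with ⟨t, ht⟩; omega
            have := hd (m - 2) (by rcases hme with ⟨t, ht⟩; exact ⟨t - 1, by omega⟩)
              (by omega) (by omega)
            rwa [show m - 2 + 2 = m by omega] at this
        have hmm2 : G.dist (α m) (α (m + 2)) = 2 := hd m hme hm2 hmn
        -- upper bound
        obtain ⟨p, hp⟩ := (hreach m (by omega)).exists_walk_length_eq_dist
        obtain ⟨q, hq⟩ := SimpleGraph.exists_walk_of_dist_ne_zero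
          (u := α m) (v := α (m + 2)) (by rw [hmm2]; norm_num)
        have hub : G.dist (α 0) (α (m + 2)) ≤ m + 2 := by
          have h := SimpleGraph.dist_le (p.append q)
          rw [SimpleGraph.Walk.length_append, hp, hq, hdm, hmm2] at h
          exact h
        by_contra hne'
        have hlt : G.dist (α 0) (α (m + 2)) < m + 2 := lt_of_le_of_ne hub hne'
        obtain ⟨r, hr⟩ := (hreach (m + 2) (by omega)).exists_walk_length_eq_dist
        by_cases hmem : α m ∈ r.support
        · have h1 : G.dist (α 0) (α m) ≤ (r.takeUntil _ hmem).length :=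
            SimpleGraph.dist_le _
          have h2 : G.dist (α m) (α (m + 2)) ≤ (r.dropUntil _ hmem).length :=
            SimpleGraph.dist_le _
          have hsplit : (r.takeUntil _ hmem).length + (r.dropUntil _ hmem).length
              = r.length := by
            rw [← SimpleGraph.Walk.length_append, SimpleGraph.Walk.take_spec]
          omega
        · obtain ⟨X, instX, π, hπ, hbig⟩ := hproj m hme hm2 hmn
          obtain ⟨s, hs⟩ := (hreach (m - 2) (by omega)).exists_walk_length_eq_dist
          by_cases hmem2 : α m ∈ s.support
          · have h1 : G.dist (α 0) (α m) ≤ (s.takeUntil _ hmem2).length :=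
              SimpleGraph.dist_le _
            have h2 := SimpleGraph.Walk.length_takeUntil_le s hmem2
            omega
          · have e3 : G.Adj (α (m - 1)) (α m) := by
              have := hwalk (m - 1) (by omega)
              rwa [show m - 1 + 1 = m by omega] at this
            have e1 : G.Adj (α (m - 2)) (α (m - 1)) := by
              have := hwalk (m - 2) (by omega)
              rwa [show m - 2 + 1 = m - 1 by omega] at this
            set w : G.Walk (α (m - 2)) (α (m + 2)) :=
              SimpleGraph.Walk.cons e1 (SimpleGraph.Walk.cons e1.symm
                (s.reverse.append r)) with hw
            have hne2 : α (m - 2) ≠ α m := by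
              intro h
              rw [h] at hαm2
              rw [SimpleGraph.dist_self] at hαm2
              exact two_ne_zero hαm2.symm
            have hne1 : α (m - 1) ≠ α m := e3.ne
            have hWsup : ∀ v ∈ w.support, v ∉ ({α m} : Set V) := by
              intro v hv
              simp only [hw, SimpleGraph.Walk.support_cons, List.mem_cons,
                SimpleGraph.Walk.support_append, List.mem_append,
                SimpleGraph.Walk.support_reverse, List.mem_reverse] at hv
              rcases hv with rfl | rfl | hv | hv
              · simpa using hne2
              · simpa using hne1
              · have : v ∈ s.support := hv
                intro hc
                exact hmem2 (by rwa [Set.mem_singleton_iff.mp hc] at this)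
              · have : v ∈ r.support := List.mem_of_mem_tail hv
                intro hc
                exact hmem (by rwa [Set.mem_singleton_iff.mp hc] at this)
            have hlen1 : 1 ≤ w.length := by
              simp [hw, SimpleGraph.Walk.length_cons]
            have hbound := walk_proj_bound hπ w hWsup hlen1
            have hwl : w.length = 2 + s.length + r.length := by
              simp [hw, SimpleGraph.Walk.length_cons,
                SimpleGraph.Walk.length_append, SimpleGraph.Walk.length_reverse]
              omega
            have hnat : 4 * n ≤ 2 * w.length := by
              have : (4 * n : ℝ) ≤ 2 * (w.length : ℝ) := le_trans hbig hbound
              exact_mod_cast this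
            omega
  exact fun k hk _ hkn => key k hk hkn
end
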